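/- arXiv:2306.10600 — 2 statements merged into one kernel-verified Lean document; each statement's English description precedes it below -/
import Mathlib

section
/- In any congestion game with strictly positive resource costs, fix ε > 0 and let s^0 → s^1 → ... → s^T be any sequence of strategy profiles in which each step is a (1+ε)-improving move. Then T < (1 + 1/ε)·n·m·(c_max/c_min), where c_max = max_{r ∈ R, j ∈ {1,...,n}} c_r(j) and c_min = min_{r ∈ R, j ∈ {1,...,n}} c_r(j) > 0, n is the number of players, and m is the number of resources. -/
/-- The load of resource `r` under strategy profile `s`: the number of players using `r`. -/
def load {n m : ℕ} (s : Fin n → Finset (Fin m)) (r : Fin m) : ℕ :=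
  (Finset.univ.filter fun i => r ∈ s i).card

/-- The cost of player `i` under profile `s`, with resource costs `cost r ℓ`. -/
def playerCost {n m : ℕ} (cost : Fin m → ℕ → ℝ) (s : Fin n → Finset (Fin m)) (i : Fin n) : ℝ :=
  ∑ r ∈ s i, cost r (load s r)

/-- Rosenthal's potential `Φ(s) = Σ_{r ∈ R} Σ_{j=1}^{ℓ_r(s)} c_r(j)`. -/
def potential {n m : ℕ} (cost : Fin m → ℕ → ℝ) (s : Fin n → Finset (Fin m)) : ℝ :=
  ∑ r : Fin m, ∑ j ∈ Finset.Icc 1 (load s r), cost r j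

/-- A strategy profile is valid when each player plays a strategy from their strategy set. -/
def ValidProfile {n m : ℕ} (strat : Fin n → Set (Finset (Fin m)))
    (s : Fin n → Finset (Fin m)) : Prop :=
  ∀ i, s i ∈ strat i

/-- An `(1+ε)`-improving move from `s` to `s'`: some player `i` deviates to a strategy
`si' ∈ S_i` with `(1+ε)·C_i(s') < C_i(s)`. -/
def ImprovingMove {n m : ℕ} (strat : Fin n → Set (Finset (Fin m))) (cost : Fin m → ℕ → ℝ)
    (ε : ℝ) (s s' : Fin n → Finset (Fin m)) : Prop :=
  ∃ i : Fin n, ∃ si' ∈ strat i, s' = Function.update s i si' ∧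
    (1 + ε) * playerCost cost s' i < playerCost cost s i

lemma load_update {n m : ℕ} (s : Fin n → Finset (Fin m)) (i : Fin n) (si' : Finset (Fin m))
    (r : Fin m) :
    load (Function.update s i si') r + (if r ∈ s i then 1 else 0)
      = load s r + (if r ∈ si' then 1 else 0) := by
  unfold load
  rw [Finset.card_filter, Finset.card_filter,
    ← Finset.sum_erase_add _ _ (Finset.mem_univ i),
    ← Finset.sum_erase_add _ _ (Finset.mem_univ i)]
  have h : ∀ x ∈ Finset.univ.erase i,
      (if r ∈ Function.update s i si' x then 1 else 0) = (if r ∈ s x then 1 else 0) := by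
    intro x hx
    rw [Function.update_of_ne (Finset.ne_of_mem_erase hx)]
  rw [Finset.sum_congr rfl h, Function.update_self]
  omega

lemma load_le {n m : ℕ} (s : Fin n → Finset (Fin m)) (r : Fin m) : load s r ≤ n := by
  classical
  calc load s r ≤ Finset.univ.card := Finset.card_filter_le _ _
    _ = n := Finset.card_fin n

lemma load_pos {n m : ℕ} (s : Fin n → Finset (Fin m)) (i : Fin n) (r : Fin m) (hr : r ∈ s i) :
    load s r ∈ Finset.Icc 1 n := by
  have h1 : 0 < load s r := Finset.card_pos.mpr ⟨i, Finset.mem_filter.mpr ⟨Finset.mem_univ i, hr⟩⟩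
  rw [Finset.mem_Icc]
  exact ⟨h1, load_le s r⟩

lemma potential_diff {n m : ℕ} (cost : Fin m → ℕ → ℝ) (s : Fin n → Finset (Fin m))
    (i : Fin n) (si' : Finset (Fin m)) :
    potential cost (Function.update s i si') - potential cost s
      = playerCost cost (Function.update s i si') i - playerCost cost s i := by
  classical
  set s' := Function.update s i si' with hs'
  have hsi : s' i = si' := Function.update_self ..
  unfold potential playerCost
  rw [hsi, ← Finset.sum_sub_distrib]
  have e1 : (∑ r ∈ si', cost r (load s' r))
      = ∑ r : Fin m, if r ∈ si' then cost r (load s' r) else 0 := by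
    rw [Finset.sum_ite_mem, Finset.univ_inter]
  have e2 : (∑ r ∈ s i, cost r (load s r))
      = ∑ r : Fin m, if r ∈ s i then cost r (load s r) else 0 := by
    rw [Finset.sum_ite_mem, Finset.univ_inter]
  rw [e1, e2, ← Finset.sum_sub_distrib]
  apply Finset.sum_congr rfl
  intro r _
  have hl := load_update s i si' r
  rw [← hs'] at hl
  by_cases h1 : r ∈ si' <;> by_cases h2 : r ∈ s i <;> simp only [h1, h2, if_true, if_false] at hl ⊢
  · have : load s' r = load s r := by omega
    rw [this]; ring
  · have : load s' r = load s r + 1 := by omega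
    rw [this, Finset.sum_Icc_succ_top (by omega)]; ring
  · have : load s r = load s' r + 1 := by omega
    rw [this, Finset.sum_Icc_succ_top (by omega)]; ring
  · have : load s' r = load s r := by omega
    rw [this]; ring

/-- in a congestion game with strictly positive resource costs, any sequence
`s^0 → s^1 → ⋯ → s^T` of `(1+ε)`-improving moves has length
`T < (1 + 1/ε)·n·m·(c_max/c_min)`. -/
theorem improving_sequence_length_bound {n m : ℕ}
    (strat : Fin n → Set (Finset (Fin m)))
    (hstrat : ∀ i, ∀ t ∈ strat i, t.Nonempty)
    (cost : Fin m → ℕ → ℝ)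
    (hpos : ∀ r : Fin m, ∀ j ∈ Finset.Icc 1 n, 0 < cost r j)
    (ε : ℝ) (hε : 0 < ε)
    (T : ℕ) (s : ℕ → Fin n → Finset (Fin m))
    (hvalid : ∀ k ≤ T, ValidProfile strat (s k))
    (hmoves : ∀ k < T, ImprovingMove strat cost ε (s k) (s (k + 1)))
    (cmax cmin : ℝ)
    (hcmax : IsGreatest {x | ∃ r : Fin m, ∃ j ∈ Finset.Icc 1 n, cost r j = x} cmax)
    (hcmin : IsLeast {x | ∃ r : Fin m, ∃ j ∈ Finset.Icc 1 n, cost r j = x} cmin) :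
    (T : ℝ) < (1 + 1 / ε) * n * m * (cmax / cmin) := by
  classical
  obtain ⟨⟨r0, j0, hj0, hj0e⟩, hub⟩ := hcmax
  obtain ⟨⟨r1, j1, hj1, hj1e⟩, hlb⟩ := hcmin
  have hcmin_pos : 0 < cmin := hj1e ▸ hpos r1 j1 hj1
  have hn : 0 < n := by
    rw [Finset.mem_Icc] at hj1; omega
  have hm : 0 < m := r1.pos
  have hminmax : cmin ≤ cmax := hlb ⟨r0, j0, hj0, hj0e⟩
  have hcmax_pos : 0 < cmax := lt_of_lt_of_le hcmin_pos hminmax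
  have hRHSpos : 0 < (1 + 1 / ε) * n * m * (cmax / cmin) := by
    have h1 : (0:ℝ) < (n:ℝ) := by exact_mod_cast hn
    have h2 : (0:ℝ) < (m:ℝ) := by exact_mod_cast hm
    exact mul_pos (mul_pos (mul_pos (by positivity) h1) h2) (by positivity)
  rcases Nat.eq_zero_or_pos T with hT | hT
  · rw [hT]; exact_mod_cast hRHSpos
  -- player cost lower bound on valid profiles
  have hpc : ∀ k ≤ T, ∀ i : Fin n, cmin ≤ playerCost cost (s k) i := by
    intro k hk i
    obtain ⟨r, hr⟩ := hstrat i _ (hvalid k hk i)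
    calc cmin ≤ cost r (load (s k) r) := hlb ⟨r, _, load_pos (s k) i r hr, rfl⟩
      _ ≤ playerCost cost (s k) i := by
          apply Finset.single_le_sum (f := fun r' => cost r' (load (s k) r'))
            (fun r' hr' => (hpos _ _ (load_pos (s k) i r' hr')).le) hr
  -- potential bounds
  have hpot_ub : ∀ p : Fin n → Finset (Fin m), potential cost p ≤ (n : ℝ) * m * cmax := by
    intro p
    have : potential cost p ≤ ∑ _r : Fin m, (n : ℝ) * cmax := by
      apply Finset.sum_le_sum
      intro r _
      calc ∑ j ∈ Finset.Icc 1 (load p r), cost r j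
          ≤ ∑ j ∈ Finset.Icc 1 (load p r), cmax := by
            apply Finset.sum_le_sum
            intro j hj
            rw [Finset.mem_Icc] at hj
            exact hub ⟨r, j, Finset.mem_Icc.mpr ⟨hj.1, hj.2.trans (load_le p r)⟩, rfl⟩
        _ = (load p r : ℝ) * cmax := by
            rw [Finset.sum_const, Nat.card_Icc]
            simp [nsmul_eq_mul]
        _ ≤ (n : ℝ) * cmax := by
            apply mul_le_mul_of_nonneg_right _ hcmax_pos.le
            exact_mod_cast load_le p r
    calc potential cost p ≤ ∑ _r : Fin m, (n : ℝ) * cmax := this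
      _ = (n : ℝ) * m * cmax := by
          rw [Finset.sum_const]
          simp [nsmul_eq_mul]; ring
  have hpot_lb : ∀ p : Fin n → Finset (Fin m), 0 ≤ potential cost p := by
    intro p
    apply Finset.sum_nonneg
    intro r _
    apply Finset.sum_nonneg
    intro j hj
    rw [Finset.mem_Icc] at hj
    exact (hpos r j (Finset.mem_Icc.mpr ⟨hj.1, hj.2.trans (load_le p r)⟩)).le
  -- each step drops the potential by more than ε * cmin
  have hdrop : ∀ k < T, potential cost (s (k + 1)) + ε * cmin < potential cost (s k) := by
    intro k hk
    obtain ⟨i, si', _, hupd, himp⟩ := hmoves k hk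
    have hd : potential cost (s (k + 1)) - potential cost (s k)
        = playerCost cost (s (k + 1)) i - playerCost cost (s k) i := by
      rw [hupd]; exact potential_diff cost (s k) i si'
    have h1 : cmin ≤ playerCost cost (s (k + 1)) i := hpc (k + 1) hk i
    nlinarith [mul_le_mul_of_nonneg_left h1 hε.le]
  -- telescoping
  have key : (T : ℝ) * (ε * cmin) < potential cost (s 0) - potential cost (s T) := by
    have hlt := Finset.sum_lt_sum_of_nonempty (Finset.nonempty_range_iff.mpr hT.ne')
      (f := fun _ => ε * cmin)
      (g := fun k => potential cost (s k) - potential cost (s (k + 1)))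
      (fun k hk => by
        have h := hdrop k (Finset.mem_range.mp hk); linarith)
    rw [Finset.sum_range_sub' (fun k => potential cost (s k)) T] at hlt
    simpa [Finset.sum_const, nsmul_eq_mul] using hlt
  have key2 : (T : ℝ) * (ε * cmin) < (n : ℝ) * m * cmax := by
    have := hpot_ub (s 0)
    have := hpot_lb (s T)
    linarith
  have h3 : (T : ℝ) < (1 / ε) * n * m * (cmax / cmin) := by
    have heq : (1 / ε) * (n : ℝ) * m * (cmax / cmin) = ((n : ℝ) * m * cmax) / (ε * cmin) := by
      field_simp
    rw [heq]
    rw [lt_div_iff₀ (by positivity)]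
    linarith
  have h4 : 0 ≤ (n : ℝ) * m * (cmax / cmin) := by positivity
  nlinarith
end

section
/- In any congestion game with m ≥ 2 resources and resource costs taking values in (0,1], fix ε > 0 and let s^0 → s^1 → ... → s^T be any sequence of strategy profiles in which each step is a (1+ε)-improving move. Then T ≤ min{ (1 + 1/ε)·n·m/c_min , (n·m)^m }, where c_min = min_{r ∈ R, j ∈ {1,...,n}} c_r(j) > 0 and n is the number of players. -/
open Finset

lemma load_update_eq1 {n m : ℕ} (s : Fin n → Finset (Fin m)) (i : Fin n)
    (si' : Finset (Fin m)) (r : Fin m) (h1 : r ∈ s i) (h2 : r ∈ si') :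
    load (Function.update s i si') r = load s r := by
  unfold load
  congr 1
  ext j
  by_cases hj : j = i <;> simp [hj, Function.update_apply, h1, h2]

lemma load_update_eq2 {n m : ℕ} (s : Fin n → Finset (Fin m)) (i : Fin n)
    (si' : Finset (Fin m)) (r : Fin m) (h1 : r ∉ s i) (h2 : r ∉ si') :
    load (Function.update s i si') r = load s r := by
  unfold load
  congr 1
  ext j
  by_cases hj : j = i <;> simp [hj, Function.update_apply, h1, h2]

lemma load_update_eq3 {n m : ℕ} (s : Fin n → Finset (Fin m)) (i : Fin n)
    (si' : Finset (Fin m)) (r : Fin m) (h1 : r ∈ s i) (h2 : r ∉ si') :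
    load s r = load (Function.update s i si') r + 1 := by
  unfold load
  have hfil : (Finset.univ.filter fun j => r ∈ s j)
      = insert i (Finset.univ.filter fun j => r ∈ Function.update s i si' j) := by
    ext j
    by_cases hj : j = i <;> simp [hj, Function.update_apply, h1, h2]
  rw [hfil, Finset.card_insert_of_notMem (by simp [h2])]

lemma load_update_eq4 {n m : ℕ} (s : Fin n → Finset (Fin m)) (i : Fin n)
    (si' : Finset (Fin m)) (r : Fin m) (h1 : r ∉ s i) (h2 : r ∈ si') :
    load (Function.update s i si') r = load s r + 1 := by
  unfold load
  have hfil : (Finset.univ.filter fun j => r ∈ Function.update s i si' j)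
      = insert i (Finset.univ.filter fun j => r ∈ s j) := by
    ext j
    by_cases hj : j = i <;> simp [hj, Function.update_apply, h1, h2]
  rw [hfil, Finset.card_insert_of_notMem (by simp [h1])]

lemma sum_Icc_diff {n m : ℕ} (cost : Fin m → ℕ → ℝ) (s : Fin n → Finset (Fin m))
    (i : Fin n) (si' : Finset (Fin m)) (r : Fin m) :
    (∑ j ∈ Finset.Icc 1 (load s r), cost r j)
      - (∑ j ∈ Finset.Icc 1 (load (Function.update s i si') r), cost r j)
    = (if r ∈ s i then cost r (load s r) else 0)
      - (if r ∈ si' then cost r (load (Function.update s i si') r) else 0) := by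
  by_cases h1 : r ∈ s i <;> by_cases h2 : r ∈ si' <;> simp only [h1, h2, if_true, if_false]
  · rw [load_update_eq1 s i si' r h1 h2]; ring
  · rw [load_update_eq3 s i si' r h1 h2,
      Finset.sum_Icc_succ_top (Nat.succ_le_succ (Nat.zero_le _))]
    ring
  · rw [load_update_eq4 s i si' r h1 h2,
      Finset.sum_Icc_succ_top (Nat.succ_le_succ (Nat.zero_le _))]
    ring
  · rw [load_update_eq2 s i si' r h1 h2]; ring

lemma potential_sub {n m : ℕ} (cost : Fin m → ℕ → ℝ) (s : Fin n → Finset (Fin m))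
    (i : Fin n) (si' : Finset (Fin m)) :
    potential cost s - potential cost (Function.update s i si')
      = playerCost cost s i - playerCost cost (Function.update s i si') i := by
  unfold potential playerCost
  rw [← Finset.sum_sub_distrib,
    Finset.sum_congr rfl (fun r _ => sum_Icc_diff cost s i si' r),
    Finset.sum_sub_distrib, Function.update_self,
    Finset.sum_ite_mem, Finset.sum_ite_mem, Finset.univ_inter, Finset.univ_inter]

/-- in a congestion game with `m ≥ 2` resources and resource costs in `(0,1]`,
any sequence of `(1+ε)`-improving moves has length
`T ≤ min{ (1 + 1/ε)·n·m/c_min , (n·m)^m }`. -/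
theorem improving_sequence_length_bound_combined {n m : ℕ} (hm : 2 ≤ m)
    (strat : Fin n → Set (Finset (Fin m)))
    (hstrat : ∀ i, ∀ t ∈ strat i, t.Nonempty)
    (cost : Fin m → ℕ → ℝ)
    (hpos : ∀ r : Fin m, ∀ j ∈ Finset.Icc 1 n, 0 < cost r j ∧ cost r j ≤ 1)
    (ε : ℝ) (hε : 0 < ε)
    (T : ℕ) (s : ℕ → Fin n → Finset (Fin m))
    (hvalid : ∀ k ≤ T, ValidProfile strat (s k))
    (hmoves : ∀ k < T, ImprovingMove strat cost ε (s k) (s (k + 1)))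
    (cmin : ℝ)
    (hcmin : IsLeast {x | ∃ r : Fin m, ∃ j ∈ Finset.Icc 1 n, cost r j = x} cmin) :
    (T : ℝ) ≤ min ((1 + 1 / ε) * n * m / cmin) ((n * m : ℝ) ^ m) := by

  obtain ⟨⟨r0, j0, hj0, hj0eq⟩, hlb⟩ := hcmin
  have hn : 1 ≤ n := by
    have := Finset.mem_Icc.mp hj0; omega
  have hcminpos : 0 < cmin := hj0eq ▸ (hpos r0 j0 hj0).1
  have loadle : ∀ (t : Fin n → Finset (Fin m)) (r : Fin m), load t r ≤ n := by
    intro t r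
    exact (Finset.card_filter_le _ _).trans (by simp)
  have potnn : ∀ t : Fin n → Finset (Fin m), 0 ≤ potential cost t := by
    intro t
    refine Finset.sum_nonneg fun r _ => Finset.sum_nonneg fun j hj => ?_
    obtain ⟨h1, h2⟩ := Finset.mem_Icc.mp hj
    exact (hpos r j (Finset.mem_Icc.mpr ⟨h1, h2.trans (loadle t r)⟩)).1.le
  have potub : ∀ t : Fin n → Finset (Fin m), potential cost t ≤ n * m := by
    intro t
    have hinner : ∀ r : Fin m, (∑ j ∈ Finset.Icc 1 (load t r), cost r j) ≤ (n : ℝ) := by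
      intro r
      calc (∑ j ∈ Finset.Icc 1 (load t r), cost r j)
          ≤ ∑ _j ∈ Finset.Icc 1 (load t r), (1 : ℝ) := by
            refine Finset.sum_le_sum fun j hj => ?_
            obtain ⟨h1, h2⟩ := Finset.mem_Icc.mp hj
            exact (hpos r j (Finset.mem_Icc.mpr ⟨h1, h2.trans (loadle t r)⟩)).2
        _ = (load t r : ℝ) := by simp
        _ ≤ (n : ℝ) := by exact_mod_cast loadle t r
    calc potential cost t ≤ ∑ _r : Fin m, (n : ℝ) :=
          Finset.sum_le_sum fun r _ => hinner r
      _ = (m : ℝ) * n := by simp [mul_comm]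
      _ = (n : ℝ) * m := by ring
  have step : ∀ k, k < T → potential cost (s (k + 1)) + ε * cmin ≤ potential cost (s k) := by
    intro k hk
    obtain ⟨i, si', hsi', heq, hlt⟩ := hmoves k hk
    have hki : s (k + 1) i = si' := by rw [heq, Function.update_self]
    have hne : (s (k + 1) i).Nonempty := hki ▸ hstrat i si' hsi'
    have hterm : ∀ r ∈ s (k + 1) i, cmin ≤ cost r (load (s (k + 1)) r) := by
      intro r hr
      refine hlb ⟨r, load (s (k + 1)) r, Finset.mem_Icc.mpr ⟨?_, loadle _ r⟩, rfl⟩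
      exact Finset.card_pos.mpr ⟨i, Finset.mem_filter.mpr ⟨Finset.mem_univ i, hr⟩⟩
    have hC' : cmin ≤ playerCost cost (s (k + 1)) i := by
      obtain ⟨r1, hr1⟩ := hne
      calc cmin ≤ cost r1 (load (s (k + 1)) r1) := hterm r1 hr1
        _ ≤ playerCost cost (s (k + 1)) i :=
          Finset.single_le_sum (fun r hr => le_trans hcminpos.le (hterm r hr)) hr1
    have hdiff : potential cost (s k) - potential cost (s (k + 1))
        = playerCost cost (s k) i - playerCost cost (s (k + 1)) i := by
      rw [heq]; exact potential_sub cost (s k) i si'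
    have h1 : ε * cmin ≤ ε * playerCost cost (s (k + 1)) i :=
      mul_le_mul_of_nonneg_left hC' hε.le
    nlinarith [hlt, hdiff, h1]
  have tele : ∀ k ≤ T, potential cost (s k) + k * (ε * cmin) ≤ potential cost (s 0) := by
    intro k
    induction k with
    | zero => intro _; simp
    | succ k ih =>
      intro hk
      have h1 := ih (by omega)
      have h2 := step k (by omega)
      push_cast
      linarith
  -- first bound
  have key : (T : ℝ) * (ε * cmin) ≤ n * m := by
    have h1 := tele T le_rfl
    have h2 := potnn (s T)
    have h3 := potub (s 0)
    linarith
  have hb1 : (T : ℝ) ≤ (1 + 1 / ε) * n * m / cmin := by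
    rw [le_div_iff₀ hcminpos]
    have h2 : (T : ℝ) * cmin ≤ n * m / ε := by
      rw [le_div_iff₀ hε]
      nlinarith [key]
    have h3 : (n : ℝ) * m / ε ≤ (1 + 1 / ε) * n * m := by
      rw [div_eq_mul_inv, one_div]
      nlinarith [mul_nonneg (Nat.cast_nonneg n : (0:ℝ) ≤ n) (Nat.cast_nonneg m : (0:ℝ) ≤ m),
        inv_nonneg.mpr hε.le]
    linarith
  -- second bound
  have dec : ∀ b ≤ T, ∀ a < b, potential cost (s b) < potential cost (s a) := by
    intro b
    induction b with
    | zero => intro _ a ha; omega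
    | succ b ih =>
      intro hbT a ha
      have hb := step b (by omega)
      have hpos' : 0 < ε * cmin := mul_pos hε hcminpos
      rcases Nat.lt_succ_iff_lt_or_eq.mp ha with h | h
      · have := ih (by omega) a h; linarith
      · subst h; linarith
  have potload : ∀ t t' : Fin n → Finset (Fin m), (∀ r, load t r = load t' r) →
      potential cost t = potential cost t' := by
    intro t t' h
    exact Finset.sum_congr rfl fun r _ => by rw [h r]
  have hinj : Function.Injective
      (fun k : Fin (T + 1) => fun r : Fin m =>
        (⟨load (s (k : ℕ)) r, Nat.lt_succ_of_le (loadle _ r)⟩ : Fin (n + 1))) := by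
    intro a b hab
    have hload : ∀ r, load (s (a : ℕ)) r = load (s (b : ℕ)) r := by
      intro r
      exact congrArg Fin.val (congrFun hab r)
    have hpot := potload _ _ hload
    rcases lt_trichotomy (a : ℕ) (b : ℕ) with h | h | h
    · have := dec (b : ℕ) (by omega) (a : ℕ) h
      linarith
    · exact Fin.ext h
    · have := dec (a : ℕ) (by omega) (b : ℕ) h
      linarith
  have hcard := Fintype.card_le_of_injective _ hinj
  simp only [Fintype.card_fin, Fintype.card_fun] at hcard
  have hnm : n + 1 ≤ n * m := by
    calc n + 1 ≤ n * 2 := by omega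
      _ ≤ n * m := Nat.mul_le_mul_left n hm
  have hT : T + 1 ≤ (n * m) ^ m :=
    hcard.trans (Nat.pow_le_pow_left hnm m)
  have hb2 : (T : ℝ) ≤ ((n : ℝ) * m) ^ m := by
    have : (T : ℕ) ≤ (n * m) ^ m := by omega
    calc (T : ℝ) ≤ (((n * m) ^ m : ℕ) : ℝ) := by exact_mod_cast this
      _ = ((n : ℝ) * m) ^ m := by push_cast; ring
  exact le_min hb1 hb2
end
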